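/- Let I be an elementary inference system and, for 1 ≤ i ≤ m, 1 ≤ j ≤ nᵢ, let A_{ij} be atoms with variables x₁,…,x_k. If the grounded canonical model M↓ satisfies the ground formula ⋁ᵢ ⋀ⱼ A_{ij}↓ (each variable x replaced by c_x), then M↓ satisfies the universally quantified formula (∀x₁)⋯(∀x_k) ⋁ᵢ ⋀ⱼ A_{ij}. -/

import Mathlib

inductive Tm (F V : Type) : Type where
  | var : V → Tm F V
  | app : F → List (Tm F V) → Tm F V

namespace Tm

def subE {F F' V W : Type} (emb : F → F') (σ : V → Tm F' W) : Tm F V → Tm F' W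
  | .var x => σ x
  | .app f ts => .app (emb f) (ts.attach.map (fun t => subE emb σ t.1))
decreasing_by simp_wf; have := List.sizeOf_lt_of_mem t.2; omega

def eval {F V D : Type} (fn : F → List D → D) (v : V → D) : Tm F V → D
  | .var x => v x
  | .app f ts => fn f (ts.attach.map (fun t => eval fn v t.1))
decreasing_by simp_wf; have := List.sizeOf_lt_of_mem t.2; omega

def vars {F V : Type} : Tm F V → Set V
  | .var x => {x}
  | .app _ ts => (ts.attach.map (fun t => vars t.1)).foldr (· ∪ ·) ∅
decreasing_by simp_wf; have := List.sizeOf_lt_of_mem t.2; omega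

def gr {F V : Type} : Tm F V → Tm (F ⊕ V) Empty :=
  subE Sum.inl (fun x => .app (Sum.inr x) [])

def ungr {F V : Type} : Tm (F ⊕ V) Empty → Tm F V
  | .var e => e.elim
  | .app (Sum.inl f) ts => .app f (ts.attach.map (fun t => ungr t.1))
  | .app (Sum.inr x) _ => .var x
decreasing_by simp_wf; have := List.sizeOf_lt_of_mem t.2; omega

inductive WFg {F V : Type} : Tm (F ⊕ V) Empty → Prop where
  | inl {f : F} {ts : List (Tm (F ⊕ V) Empty)} (h : ∀ t ∈ ts, WFg t) :
      WFg (.app (Sum.inl f) ts)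
  | inr {x : V} : WFg (.app (Sum.inr x) [])

end Tm

structure Atm (F P V : Type) : Type where
  pred : P
  args : List (Tm F V)

def Atm.subE {F F' P V W : Type} (emb : F → F') (σ : V → Tm F' W) (A : Atm F P V) :
    Atm F' P W :=
  ⟨A.pred, A.args.map (Tm.subE emb σ)⟩

def Atm.gr {F P V : Type} : Atm F P V → Atm (F ⊕ V) P Empty :=
  Atm.subE Sum.inl (fun x => .app (Sum.inr x) [])

def Atm.vars {F P V : Type} (A : Atm F P V) : Set V :=
  A.args.foldr (fun t s => t.vars ∪ s) ∅

def Atm.Sat {F P V D : Type} (fn : F → List D → D) (pr : P → List D → Prop)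
    (v : V → D) (A : Atm F P V) : Prop :=
  pr A.pred (A.args.map (Tm.eval fn v))

structure Rule (F P V : Type) : Type where
  prems : List (Atm F P V)
  concl : Atm F P V

inductive Prov {F F' P V W : Type} (I : Set (Rule F P V)) (emb : F → F') :
    Atm F' P W → Prop where
  | step (ρ : Rule F P V) (hρ : ρ ∈ I) (σ : V → Tm F' W)
      (ih : ∀ B ∈ ρ.prems, Prov I emb (B.subE emb σ)) :
      Prov I emb (ρ.concl.subE emb σ)

def ModelsEIS {F P V D : Type} (fn : F → List D → D) (pr : P → List D → Prop)
    (I : Set (Rule F P V)) : Prop :=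
  ∀ ρ ∈ I, ∀ v : V → D,
    (∀ B ∈ ρ.prems, B.Sat fn pr v) → ρ.concl.Sat fn pr v

def QSat {V D : Type} [DecidableEq V] :
    List (Bool × V) → ((V → D) → Prop) → (V → D) → Prop
  | [], base, v => base v
  | (true, x) :: qs, base, v => ∀ d : D, QSat qs base (Function.update v x d)
  | (false, x) :: qs, base, v => ∃ d : D, QSat qs base (Function.update v x d)

def GT (F V : Type) : Type := {s : Tm (F ⊕ V) Empty // s.WFg}

def GT.app {F V : Type} (f : F) (ss : List (GT F V)) : GT F V :=
  ⟨.app (Sum.inl f) (ss.map Subtype.val), Tm.WFg.inl (by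
    intro t ht
    rcases List.mem_map.mp ht with ⟨u, _, rfl⟩
    exact u.2)⟩

def GT.cvar {F V : Type} (x : V) : GT F V := ⟨.app (Sum.inr x) [], Tm.WFg.inr⟩

/-- Interpretation of the extended signature `F ⊕ V` on well-formed ground terms. -/
def fnE (F V : Type) : (F ⊕ V) → List (GT F V) → GT F V
  | .inl f, ss => GT.app f ss
  | .inr x, _ => GT.cvar x

/-- Predicate interpretation of the grounded canonical model `M↓`:
a ground atom holds iff its ungrounding is provable in `I`. -/
def prE {F P V : Type} (I : Set (Rule F P V)) : P → List (GT F V) → Prop :=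
  fun Pd ss => Prov I (id : F → F) (⟨Pd, ss.map (fun s => s.1.ungr)⟩ : Atm F P V)

/-!
In `M↓`, an atom `A` holds under a valuation `v` exactly when the instance of `A` obtained by
substituting the ungrounded values of `v` for its variables is provable in `I`. Under the
valuation `x ↦ c_x` this instance is `A` itself, so every disjunct true there is provable, and
provability is closed under substitution, so that disjunct holds under every valuation.
-/

namespace Tm

variable {F F' F'' V W W' : Type}

@[simp]
theorem subE_var (emb : F → F') (σ : V → Tm F' W) (x : V) : (var x).subE emb σ = σ x := by
  rw [subE]

@[simp]
theorem subE_app (emb : F → F') (σ : V → Tm F' W) (f : F) (ts : List (Tm F V)) :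
    (app f ts).subE emb σ = app (emb f) (ts.map (subE emb σ)) := by
  rw [subE]
  simp

@[simp]
theorem eval_app {D : Type} (fn : F → List D → D) (v : V → D) (f : F) (ts : List (Tm F V)) :
    (app f ts).eval fn v = fn f (ts.map (eval fn v)) := by
  rw [eval]
  simp

@[simp]
theorem ungr_app_inl (f : F) (ts : List (Tm (F ⊕ V) Empty)) :
    (app (Sum.inl f) ts).ungr = app f (ts.map ungr) := by
  rw [ungr]
  simp

theorem subE_subE (emb : F → F') (emb' : F' → F'') (σ : V → Tm F' W) (τ : W → Tm F'' W') :
    ∀ t : Tm F V,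
      (t.subE emb σ).subE emb' τ = t.subE (emb' ∘ emb) (fun x => (σ x).subE emb' τ)
  | var x => by simp
  | app f ts => by
    simp only [subE_app, List.map_map, Function.comp_apply]
    congr 1
    exact List.map_congr_left fun t _ => subE_subE emb emb' σ τ t

theorem subE_id_var : ∀ t : Tm F V, t.subE id var = t
  | var x => by simp
  | app f ts => by
    rw [subE_app, List.map_congr_left (g := id) fun t _ => subE_id_var t, List.map_id]
    rfl

end Tm

namespace Atm

variable {F F' F'' P V W W' : Type}

theorem subE_subE (emb : F → F') (emb' : F' → F'') (σ : V → Tm F' W) (τ : W → Tm F'' W')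
    (A : Atm F P V) :
    (A.subE emb σ).subE emb' τ = A.subE (emb' ∘ emb) (fun x => (σ x).subE emb' τ) := by
  simp only [subE, List.map_map, Function.comp_def, Tm.subE_subE]

theorem subE_id_var (A : Atm F P V) : A.subE id Tm.var = A := by
  rw [subE, List.map_congr_left (g := id) fun t _ => Tm.subE_id_var t, List.map_id]

end Atm

theorem Prov.subE {F F' P V W W' : Type} {I : Set (Rule F P V)} {emb : F → F'}
    {A : Atm F' P W} (h : Prov I emb A) (τ : W → Tm F' W') : Prov I emb (A.subE id τ) := by
  induction h with
  | step ρ hρ σ _ ih =>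
    rw [Atm.subE_subE, Function.id_comp]
    refine Prov.step ρ hρ _ fun B hB => ?_
    simpa only [Atm.subE_subE, Function.id_comp] using ih B hB

namespace GT

variable {F P V : Type}

@[simp]
theorem ungr_cvar (x : V) : (cvar x : GT F V).1.ungr = Tm.var x := by
  simp [cvar, Tm.ungr]

theorem ungr_eval_subE_inl (v : V → GT F V) :
    ∀ t : Tm F V,
      ((t.subE Sum.inl Tm.var).eval (fnE F V) v).1.ungr = t.subE id (fun x => (v x).1.ungr)
  | .var x => by simp [Tm.eval]
  | .app f ts => by
    simp only [Tm.subE_app, Tm.eval_app, fnE, GT.app, Tm.ungr_app_inl]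
    erw [List.map_map, List.map_map, List.map_map]
    congr 1
    exact List.map_congr_left fun t _ => ungr_eval_subE_inl v t

theorem sat_subE_inl_iff (I : Set (Rule F P V)) (v : V → GT F V) (A : Atm F P V) :
    (A.subE Sum.inl Tm.var).Sat (fnE F V) (prE I) v ↔
      Prov I id (A.subE id fun x => (v x).1.ungr) := by
  simp only [Atm.Sat, prE, Atm.subE, List.map_map, Function.comp_def, ungr_eval_subE_inl]

theorem sat_subE_inl_cvar_iff (I : Set (Rule F P V)) (A : Atm F P V) :
    (A.subE Sum.inl Tm.var).Sat (fnE F V) (prE I) (fun x => cvar x) ↔ Prov I id A := by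
  simp only [sat_subE_inl_iff, ungr_cvar, Atm.subE_id_var]

end GT

/-- in the grounded canonical model, if the fully grounded disjunction of
conjunctions of atoms holds (each variable `x` replaced by `c_x`), then the universally
quantified disjunction of conjunctions holds. -/
theorem stmt10 {F P V : Type} (I : Set (Rule F P V)) (Ass : List (List (Atm F P V)))
    (h : ∃ C ∈ Ass, ∀ A ∈ C,
        (A.subE Sum.inl Tm.var).Sat (fnE F V) (prE I) (fun x => GT.cvar x)) :
    ∀ v : V → GT F V, ∃ C ∈ Ass, ∀ A ∈ C,
        (A.subE Sum.inl Tm.var).Sat (fnE F V) (prE I) v := by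
  intro v
  obtain ⟨C, hC, hsat⟩ := h
  refine ⟨C, hC, fun A hA => ?_⟩
  have hprov : Prov I id A := (GT.sat_subE_inl_cvar_iff I A).mp (hsat A hA)
  exact (GT.sat_subE_inl_iff I v A).mpr (hprov.subE _)
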